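/- Let 𝔖 = W[[u]] be the power series ring over the Witt vectors of a perfect field k of characteristic p, with Frobenius φ acting as the Witt Frobenius on W and u ↦ u^p, and let E(u) ∈ W[u] be an Eisenstein polynomial. Let 𝔐 be a finite free 𝔖-module with a map 1⊗φ: φ*𝔐 → 𝔐 whose cokernel is killed by E(u)² (height ≤ 2), and suppose 𝔐 admits a perfect 𝔖-bilinear pairing compatible with Frobenius (valued in 𝔖 with twist (−2)). Define 𝔐' = {x ∈ 𝔐 : E(u)x ∈ Im(1⊗φ)}. Then 𝔐/𝔐' is killed by E(u) and is p-torsion-free; consequently 𝔐/𝔐' is a finite free module over 𝔖/E(u) ≅ 𝒪_K. -/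

import Mathlib

/-!
Let `A` be the matrix of `F` in a basis of `𝔐` and `G` the Gram matrix of the pairing.
Compatibility with Frobenius reads `Aᵀ G A = E² c φ(G)`, and `G` is invertible, so
`(det A)²` is `E^{2n}` times a unit. As `p` does not divide `E` (its leading coefficient is a
unit), `p ∤ det A`, and Cramer's rule shows that `p`-divisibility of `E x` inside the image of
`1 ⊗ φ` can be removed: `𝔐/𝔐'` is `p`-torsion-free. Height `≤ 2` gives `E 𝔐 ⊆ 𝔐'`.

The ring `𝔖/E` is Noetherian and local with maximal ideal generated by the non-nilpotent image
of `u`, because `E(0)` is `p` times a unit; by Krull's intersection theorem it is a discrete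
valuation ring. There every nonzero element divides a power of `p`, so `𝔐/𝔐'` is
torsion-free and hence free.
-/

open scoped PowerSeries Matrix

open PowerSeries IsLocalRing

namespace PowerSeries

variable {R : Type*} [CommRing R]

theorem C_dvd_iff_dvd_coeff (r : R) (f : R⟦X⟧) : C r ∣ f ↔ ∀ n, r ∣ coeff n f := by
  refine ⟨fun ⟨g, hg⟩ n => ⟨coeff n g, by rw [hg, coeff_C_mul]⟩, fun h => ?_⟩
  choose g hg using h
  exact ⟨mk g, by ext n; rw [coeff_C_mul, coeff_mk, hg]⟩

theorem C_dvd_iff_map_eq_zero (r : R) (f : R⟦X⟧) :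
    C r ∣ f ↔ map (Ideal.Quotient.mk (Ideal.span {r})) f = 0 := by
  simp_rw [C_dvd_iff_dvd_coeff, PowerSeries.ext_iff, coeff_map, map_zero,
    Ideal.Quotient.eq_zero_iff_mem, Ideal.mem_span_singleton]

theorem prime_C {r : R} (hr : Prime r) : Prime (C r) := by
  have : (Ideal.span {r}).IsPrime := (Ideal.span_singleton_prime hr.ne_zero).mpr hr
  refine ⟨fun h => hr.ne_zero (by simpa using congrArg constantCoeff h),
    fun h => hr.not_isUnit (by simpa using h.map constantCoeff), fun f g hfg => ?_⟩
  simp_rw [C_dvd_iff_map_eq_zero, map_mul, mul_eq_zero] at hfg ⊢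
  exact hfg

end PowerSeries

section LinearAlgebra

variable {S M ι : Type*} [CommRing S] [AddCommGroup M] [Module S M] [Fintype ι]

theorem Module.Basis.toMatrix_mulVec (b : Module.Basis ι S M) (v : ι → M) (w : ι → S) :
    b.toMatrix v *ᵥ w = b.repr (∑ j, w j • v j) := by
  ext i
  simp [Matrix.mulVec, dotProduct, Module.Basis.toMatrix_apply, mul_comm]

theorem mem_span_range_of_smul_mem [DecidableEq ι] [IsDomain S] [Module.IsTorsionFree S M]
    (b : Module.Basis ι S M) (v : ι → M) {q : S} (hq : Prime q) (hdet : ¬q ∣ (b.toMatrix v).det)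
    {y : M} (hy : q • y ∈ Submodule.span S (Set.range v)) :
    y ∈ Submodule.span S (Set.range v) := by
  obtain ⟨w, hw⟩ := (Submodule.mem_span_range_iff_exists_fun S).mp hy
  have hadj : (b.toMatrix v).det • w = q • ((b.toMatrix v).adjugate *ᵥ b.repr y) := by
    rw [← Matrix.one_mulVec w, ← Matrix.smul_mulVec, ← Matrix.adjugate_mul,
      ← Matrix.mulVec_mulVec, Module.Basis.toMatrix_mulVec, hw, map_smul, Finsupp.coe_smul,
      Matrix.mulVec_smul]
  have hdvd (j : ι) : q ∣ w j :=
    (hq.dvd_or_dvd ⟨_, congrFun hadj j⟩).resolve_left hdet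
  choose w' hw' using hdvd
  refine (Submodule.mem_span_range_iff_exists_fun S).mpr ⟨w', smul_right_injective M hq.ne_zero ?_⟩
  simp only [← hw, Finset.smul_sum, smul_smul, hw']

theorem Submodule.span_range_eq_span_range_comp_basis {R M₂ : Type*} [CommRing R]
    [AddCommGroup M₂] [Module R M₂] {σ : S →+* R} (F : M →ₛₗ[σ] M₂) (b : Module.Basis ι S M) :
    Submodule.span R (Set.range F) = Submodule.span R (Set.range (F ∘ b)) := by
  refine le_antisymm (Submodule.span_le.mpr ?_)
    (Submodule.span_mono (Set.range_comp_subset_range _ _))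
  rintro _ ⟨x, rfl⟩
  rw [← b.sum_repr x, map_sum]
  exact Submodule.sum_mem _ fun j _ => by
    rw [F.map_smulₛₗ]
    exact Submodule.smul_mem _ _ (Submodule.subset_span ⟨j, rfl⟩)

theorem isUnit_det_toMatrix₂_of_bijective [DecidableEq ι] {B : M →ₗ[S] M →ₗ[S] S}
    (hB : Function.Bijective B) (b : Module.Basis ι S M) :
    IsUnit (LinearMap.toMatrix₂ b b B).det := by
  rw [← Matrix.det_transpose]
  convert LinearEquiv.isUnit_det (LinearEquiv.ofBijective B hB) b b.dualBasis using 2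
  ext i j
  simp [LinearMap.toMatrix_apply, LinearMap.toMatrix₂_apply]

end LinearAlgebra

section FrobeniusPairing

variable {S M ι : Type*} [CommRing S] [AddCommGroup M] [Module S M] [Fintype ι] [DecidableEq ι]
  {σ : S →+* S}

theorem transpose_toMatrix_mul_toMatrix₂_mul_toMatrix (F : M →ₛₗ[σ] M)
    (B : M →ₗ[S] M →ₗ[S] S) {c : S} (hBF : ∀ x y, B (F x) (F y) = c * σ (B x y))
    (b : Module.Basis ι S M) :
    (b.toMatrix (F ∘ b))ᵀ * LinearMap.toMatrix₂ b b B * b.toMatrix (F ∘ b) =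
      c • (LinearMap.toMatrix₂ b b B).map σ := by
  ext i j
  have h := Matrix.toLinearMap₂_apply b b (LinearMap.toMatrix₂ b b B) (F (b i)) (F (b j))
  rw [Matrix.toLinearMap₂_toMatrix₂, hBF] at h
  simp only [Matrix.mul_apply, Matrix.transpose_apply, Module.Basis.toMatrix_apply,
    Matrix.smul_apply, Matrix.map_apply, LinearMap.toMatrix₂_apply, smul_eq_mul,
    Function.comp_apply, Finset.sum_mul, h]
  rw [Finset.sum_comm]
  exact Finset.sum_congr rfl fun k _ => Finset.sum_congr rfl fun l _ => by ring

theorem det_toMatrix_sq_mul_det_toMatrix₂ (F : M →ₛₗ[σ] M) (B : M →ₗ[S] M →ₗ[S] S) {c : S}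
    (hBF : ∀ x y, B (F x) (F y) = c * σ (B x y)) (b : Module.Basis ι S M) :
    (b.toMatrix (F ∘ b)).det ^ 2 * (LinearMap.toMatrix₂ b b B).det =
      c ^ Fintype.card ι * σ (LinearMap.toMatrix₂ b b B).det := by
  have h := congrArg Matrix.det (transpose_toMatrix_mul_toMatrix₂_mul_toMatrix F B hBF b)
  rw [Matrix.det_mul, Matrix.det_mul, Matrix.det_transpose, Matrix.det_smul,
    ← RingHom.mapMatrix_apply, ← RingHom.map_det] at h
  rw [← h]
  ring

end FrobeniusPairing

theorem mem_span_range_of_smul_mem_of_pairing {S M : Type*} [CommRing S] [IsDomain S]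
    [AddCommGroup M] [Module S M] [Module.Finite S M] [Module.Free S M] {σ : S →+* S}
    (F : M →ₛₗ[σ] M) {B : M →ₗ[S] M →ₗ[S] S} (hB : Function.Bijective B) {c : S}
    (hBF : ∀ x y, B (F x) (F y) = c * σ (B x y)) {q : S} (hq : Prime q) (hqc : ¬q ∣ c) {y : M}
    (hy : q • y ∈ Submodule.span S (Set.range F)) : y ∈ Submodule.span S (Set.range F) := by
  classical
  let b := Module.Free.chooseBasis S M
  rw [Submodule.span_range_eq_span_range_comp_basis F b] at hy ⊢
  refine mem_span_range_of_smul_mem b _ hq (fun hdet => hqc ?_) hy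
  have hG := (isUnit_det_toMatrix₂_of_bijective hB b).map σ
  refine hq.dvd_of_dvd_pow (n := Fintype.card (Module.Free.ChooseBasisIndex S M)) ?_
  rw [← hG.dvd_mul_right, ← det_toMatrix_sq_mul_det_toMatrix₂ F B hBF b]
  exact dvd_mul_of_dvd_left (dvd_pow hdet two_ne_zero) _

section PrincipalMaximalIdeal

theorem IsLocalRing.of_isUnit_or_dvd {S : Type*} [CommRing S] [Nontrivial S] {ϖ : S}
    (hϖ : ¬IsUnit ϖ) (h : ∀ x : S, IsUnit x ∨ ϖ ∣ x) : IsLocalRing S := by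
  refine .of_nonunits_add fun a b ha hb hab => hϖ ?_
  obtain ⟨a', rfl⟩ := (h a).resolve_left ha
  obtain ⟨b', rfl⟩ := (h b).resolve_left hb
  exact isUnit_of_mul_isUnit_left (by rwa [← mul_add] at hab)

variable {S : Type*} [CommRing S] [IsLocalRing S] {ϖ : S}

theorem IsLocalRing.maximalIdeal_eq_span_of_isUnit_or_dvd (hϖ : ¬IsUnit ϖ)
    (h : ∀ x : S, IsUnit x ∨ ϖ ∣ x) : maximalIdeal S = Ideal.span {ϖ} := by
  refine le_antisymm (fun x hx => Ideal.mem_span_singleton.mpr ((h x).resolve_left hx)) ?_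
  rw [Ideal.span_le, Set.singleton_subset_iff]
  exact hϖ

variable [IsNoetherianRing S]

theorem exists_eq_pow_mul_of_maximalIdeal_eq_span (hmax : maximalIdeal S = Ideal.span {ϖ})
    {x : S} (hx : x ≠ 0) : ∃ (n : ℕ) (u : S), IsUnit u ∧ x = ϖ ^ n * u := by
  classical
  have hKrull := Ideal.iInf_pow_eq_bot_of_isLocalRing (maximalIdeal S)
    (maximalIdeal.isMaximal S).ne_top
  have hex : ∃ n, ¬ϖ ^ n ∣ x := by
    by_contra! h
    refine hx ((Submodule.mem_bot S).mp (hKrull ▸ Ideal.mem_iInf.mpr fun n => ?_))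
    rw [hmax, Ideal.span_singleton_pow, Ideal.mem_span_singleton]
    exact h n
  obtain ⟨m, hm⟩ : ∃ m, Nat.find hex = m + 1 := Nat.exists_eq_add_one.mpr
    (Nat.pos_of_ne_zero fun h0 => Nat.find_spec hex (by rw [h0, pow_zero]; exact one_dvd x))
  obtain ⟨u, rfl⟩ := not_not.mp (Nat.find_min hex (m := m) (by omega))
  refine ⟨m, u, of_not_not fun hu => Nat.find_spec hex ?_, rfl⟩
  obtain ⟨v, rfl⟩ := Ideal.mem_span_singleton'.mp (hmax ▸ (mem_maximalIdeal u).mpr hu)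
  exact hm ▸ ⟨v, by ring⟩

theorem isDomain_of_maximalIdeal_eq_span (hmax : maximalIdeal S = Ideal.span {ϖ})
    (hϖ : ∀ n, ϖ ^ n ≠ 0) : IsDomain S := by
  have : NoZeroDivisors S := ⟨fun {x y} hxy => by
    by_contra! h
    obtain ⟨m, u, hu, rfl⟩ := exists_eq_pow_mul_of_maximalIdeal_eq_span hmax h.1
    obtain ⟨n, v, hv, rfl⟩ := exists_eq_pow_mul_of_maximalIdeal_eq_span hmax h.2
    refine hϖ (m + n) ((hu.mul hv).mul_left_eq_zero.mp ?_)
    rw [pow_add, ← hxy]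
    ring⟩
  exact NoZeroDivisors.to_isDomain S

theorem isDiscreteValuationRing_of_maximalIdeal_eq_span [IsDomain S]
    (hmax : maximalIdeal S = Ideal.span {ϖ}) (hϖ : ϖ ≠ 0) : IsDiscreteValuationRing S := by
  have hfield : ¬IsField S := by
    rw [isField_iff_maximalIdeal_eq, hmax, Ideal.span_singleton_eq_bot]
    exact hϖ
  have hprin : (maximalIdeal S).IsPrincipal := ⟨ϖ, hmax⟩
  exact ((IsDiscreteValuationRing.TFAE S hfield).out 0 4).mpr hprin

/-- A nonzero element is a unit times a power of `ϖ`, so whatever it kills is killed by a power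
of `q`. -/
theorem isTorsionFree_of_smul_injective [IsDomain S] (hmax : maximalIdeal S = Ideal.span {ϖ})
    {N : Type*} [AddCommGroup N] [Module S N] {q : S} (hq : q ∈ maximalIdeal S)
    (hN : ∀ m : N, q • m = 0 → m = 0) : Module.IsTorsionFree S N := by
  refine Module.isTorsionFree_iff_smul_eq_zero.mpr fun r m hrm =>
    or_iff_not_imp_left.mpr fun hr => ?_
  obtain ⟨n, u, hu, rfl⟩ := exists_eq_pow_mul_of_maximalIdeal_eq_span hmax hr
  obtain ⟨a, rfl⟩ := Ideal.mem_span_singleton'.mp (hmax ▸ hq)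
  have hpow : ∀ k, (a * ϖ) ^ k • m = 0 → m = 0 := by
    intro k
    induction k with
    | zero => simp
    | succ k ih => exact fun h => ih (hN _ (by rwa [← mul_smul, ← pow_succ']))
  rw [mul_comm, mul_smul, hu.smul_eq_zero] at hrm
  exact hpow n (by rw [mul_pow, mul_smul, hrm, smul_zero])

end PrincipalMaximalIdeal

section EisensteinQuotient

variable {R : Type*} [CommRing R] {ϖ : R} {E : Polynomial R}

local notation "𝔖ₑ" => R⟦X⟧ ⧸ Ideal.span {(E : R⟦X⟧)}
local notation "π" => Ideal.Quotient.mk (Ideal.span {(E : R⟦X⟧)})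

theorem Polynomial.IsEisensteinAt.not_C_dvd_coe (hE : E.IsEisensteinAt (Ideal.span {ϖ})) :
    ¬PowerSeries.C ϖ ∣ (E : R⟦X⟧) := by
  rw [PowerSeries.C_dvd_iff_dvd_coeff]
  exact fun h => hE.leading (Ideal.mem_span_singleton.mpr (by simpa using h E.natDegree))

theorem not_isUnit_mk_X (hϖ : ¬IsUnit ϖ) (hE : E.IsEisensteinAt (Ideal.span {ϖ}))
    (hdeg : 0 < E.natDegree) : ¬IsUnit (π X) := by
  rintro ⟨v, hv⟩
  obtain ⟨g, hg⟩ := Ideal.Quotient.mk_surjective (↑v⁻¹ : 𝔖ₑ)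
  have h : π (X * g - 1) = 0 := by
    rw [map_sub, map_mul, map_one, hg, ← hv, Units.mul_inv, sub_self]
  obtain ⟨f, hf⟩ := Ideal.mem_span_singleton'.mp (Ideal.Quotient.eq_zero_iff_mem.mp h)
  have hconst := congrArg constantCoeff hf
  simp only [map_mul, map_sub, map_one, constantCoeff_X, zero_mul,
    Polynomial.constantCoeff_coe] at hconst
  obtain ⟨a, ha⟩ := Ideal.mem_span_singleton'.mp (hE.mem hdeg)
  refine hϖ (.of_mul_eq_one (-(constantCoeff f * a)) ?_)
  rw [← ha] at hconst
  linear_combination -hconst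

variable [IsDomain R] [IsDiscreteValuationRing R]

theorem Polynomial.IsEisensteinAt.exists_coeff_zero_eq_mul (hϖ : Irreducible ϖ)
    (hE : E.IsEisensteinAt (Ideal.span {ϖ})) (hdeg : 0 < E.natDegree) :
    ∃ u : R, IsUnit u ∧ E.coeff 0 = ϖ * u := by
  obtain ⟨u, hu⟩ := Ideal.mem_span_singleton'.mp (hE.mem hdeg)
  refine ⟨u, of_not_not fun hu' => hE.notMem ?_, by rw [← hu, mul_comm]⟩
  obtain ⟨v, rfl⟩ := Ideal.mem_span_singleton'.mp
    ((IsDiscreteValuationRing.irreducible_iff_uniformizer ϖ).mp hϖ ▸ (mem_maximalIdeal u).mpr hu')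
  rw [Ideal.span_singleton_pow, Ideal.mem_span_singleton, ← hu]
  exact ⟨v, by ring⟩

theorem Polynomial.IsEisensteinAt.isUnit_coe_of_natDegree_eq_zero (hϖ : Irreducible ϖ)
    (hE : E.IsEisensteinAt (Ideal.span {ϖ})) (hdeg : E.natDegree = 0) : IsUnit (E : R⟦X⟧) := by
  rw [isUnit_iff_constantCoeff, Polynomial.constantCoeff_coe, ← hdeg]
  refine of_not_not fun h => hE.leading ?_
  rw [← (IsDiscreteValuationRing.irreducible_iff_uniformizer ϖ).mp hϖ]
  exact (mem_maximalIdeal _).mpr h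

/-- `E(0) = ϖ u` with `u` a unit, so `ϖ ≡ -u⁻¹ (E - E(0))` modulo `E`, and `X ∣ E - E(0)`. -/
theorem mk_C_mem_span_mk_X (hϖ : Irreducible ϖ) (hE : E.IsEisensteinAt (Ideal.span {ϖ}))
    (hdeg : 0 < E.natDegree) : π (C ϖ) ∈ Ideal.span {π X} := by
  obtain ⟨u, hu, hcoeff⟩ := hE.exists_coeff_zero_eq_mul hϖ hdeg
  have hshift := sub_const_eq_X_mul_shift (E : R⟦X⟧)
  rw [Polynomial.constantCoeff_coe, hcoeff, map_mul] at hshift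
  have hE0 : π (E : R⟦X⟧) = 0 :=
    Ideal.Quotient.eq_zero_iff_mem.mpr (Ideal.mem_span_singleton_self _)
  have h := congrArg π hshift
  rw [map_sub, map_mul, map_mul, hE0, zero_sub] at h
  rw [Ideal.mem_span_singleton, ← ((hu.map C).map π).dvd_mul_right, neg_eq_iff_eq_neg.mp h]
  exact ⟨-π (mk fun n => coeff (n + 1) (E : R⟦X⟧)), by ring⟩

theorem mk_X_pow_ne_zero (hϖ : Irreducible ϖ) (hE : E.IsEisensteinAt (Ideal.span {ϖ}))
    (hdeg : 0 < E.natDegree) (n : ℕ) : π X ^ n ≠ 0 := by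
  obtain ⟨u, hu, hcoeff⟩ := hE.exists_coeff_zero_eq_mul hϖ hdeg
  have hE0 : constantCoeff (E : R⟦X⟧) = ϖ * u := by rw [Polynomial.constantCoeff_coe, hcoeff]
  rw [← map_pow, Ne, Ideal.Quotient.eq_zero_iff_mem, Ideal.mem_span_singleton]
  rintro ⟨g, hg⟩
  have hXE : ¬X ∣ (E : R⟦X⟧) := by
    rw [X_dvd_iff, hE0]
    exact mul_ne_zero hϖ.ne_zero hu.ne_zero
  obtain ⟨h, rfl⟩ := X_prime.pow_dvd_of_dvd_mul_left n hXE ⟨1, by rw [← hg, mul_one]⟩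
  have hEh : (E : R⟦X⟧) * h = 1 :=
    (mul_left_cancel₀ (pow_ne_zero n X_ne_zero) (by rw [mul_one]; linear_combination hg)).symm
  have hunit := (IsUnit.of_mul_eq_one _ hEh).map constantCoeff
  rw [hE0] at hunit
  exact hϖ.not_isUnit (isUnit_of_mul_isUnit_left hunit)

theorem isUnit_or_mk_X_dvd (hϖ : Irreducible ϖ) (hE : E.IsEisensteinAt (Ideal.span {ϖ}))
    (hdeg : 0 < E.natDegree) (y : 𝔖ₑ) : IsUnit y ∨ π X ∣ y := by
  obtain ⟨f, rfl⟩ := Ideal.Quotient.mk_surjective y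
  refine (em (IsUnit (constantCoeff f))).imp
    (fun hf => (isUnit_iff_constantCoeff.mpr hf).map π) fun hf => ?_
  obtain ⟨d, hd⟩ := Ideal.mem_span_singleton.mp
    ((IsDiscreteValuationRing.irreducible_iff_uniformizer ϖ).mp hϖ ▸ (mem_maximalIdeal _).mpr hf)
  have hshift := sub_const_eq_X_mul_shift f
  rw [hd, map_mul, sub_eq_iff_eq_add] at hshift
  rw [hshift, map_add, map_mul, map_mul]
  exact dvd_add (dvd_mul_right _ _)
    (dvd_mul_of_dvd_left (Ideal.mem_span_singleton.mp (mk_C_mem_span_mk_X hϖ hE hdeg)) _)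

theorem isLocalRing_quotient_span_eisenstein (hϖ : Irreducible ϖ)
    (hE : E.IsEisensteinAt (Ideal.span {ϖ})) (hdeg : 0 < E.natDegree) : IsLocalRing 𝔖ₑ :=
  have : Nontrivial 𝔖ₑ := nontrivial_of_ne _ _ (by simpa using mk_X_pow_ne_zero hϖ hE hdeg 0)
  .of_isUnit_or_dvd (not_isUnit_mk_X hϖ.not_isUnit hE hdeg) (isUnit_or_mk_X_dvd hϖ hE hdeg)

theorem maximalIdeal_quotient_span_eisenstein [IsLocalRing 𝔖ₑ] (hϖ : Irreducible ϖ)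
    (hE : E.IsEisensteinAt (Ideal.span {ϖ})) (hdeg : 0 < E.natDegree) :
    maximalIdeal 𝔖ₑ = Ideal.span {π X} :=
  maximalIdeal_eq_span_of_isUnit_or_dvd (not_isUnit_mk_X hϖ.not_isUnit hE hdeg)
    (isUnit_or_mk_X_dvd hϖ hE hdeg)

theorem isDomain_quotient_span_eisenstein (hϖ : Irreducible ϖ)
    (hE : E.IsEisensteinAt (Ideal.span {ϖ})) (hdeg : 0 < E.natDegree) : IsDomain 𝔖ₑ :=
  have := isLocalRing_quotient_span_eisenstein hϖ hE hdeg
  isDomain_of_maximalIdeal_eq_span (maximalIdeal_quotient_span_eisenstein hϖ hE hdeg)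
    (mk_X_pow_ne_zero hϖ hE hdeg)

theorem isDiscreteValuationRing_quotient_span_eisenstein [IsDomain 𝔖ₑ] (hϖ : Irreducible ϖ)
    (hE : E.IsEisensteinAt (Ideal.span {ϖ})) (hdeg : 0 < E.natDegree) :
    IsDiscreteValuationRing 𝔖ₑ :=
  have := isLocalRing_quotient_span_eisenstein hϖ hE hdeg
  isDiscreteValuationRing_of_maximalIdeal_eq_span
    (maximalIdeal_quotient_span_eisenstein hϖ hE hdeg)
    (by simpa using mk_X_pow_ne_zero hϖ hE hdeg 1)

theorem free_and_finite_of_isTorsionBySet_span_eisenstein (hϖ : Irreducible ϖ)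
    (hE : E.IsEisensteinAt (Ideal.span {ϖ})) {N : Type*} [AddCommGroup N] [Module R⟦X⟧ N]
    [Module.Finite R⟦X⟧ N] (hN : Module.IsTorsionBySet R⟦X⟧ N (Ideal.span {(E : R⟦X⟧)}))
    (hϖN : ∀ n : N, C ϖ • n = 0 → n = 0) :
    @Module.Free 𝔖ₑ N _ _ hN.module ∧ @Module.Finite 𝔖ₑ N _ _ hN.module := by
  let := hN.module
  have : Module.Finite 𝔖ₑ N := .of_restrictScalars_finite R⟦X⟧ _ _
  refine ⟨?_, this⟩
  rcases Nat.eq_zero_or_pos E.natDegree with hdeg | hdeg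
  · have : Subsingleton 𝔖ₑ := Ideal.Quotient.subsingleton_iff.mpr
      (Ideal.span_singleton_eq_top.mpr (hE.isUnit_coe_of_natDegree_eq_zero hϖ hdeg))
    exact .of_subsingleton' _ _
  have := isLocalRing_quotient_span_eisenstein hϖ hE hdeg
  have := isDomain_quotient_span_eisenstein hϖ hE hdeg
  have := isDiscreteValuationRing_quotient_span_eisenstein hϖ hE hdeg
  have hmax := maximalIdeal_quotient_span_eisenstein hϖ hE hdeg
  have : Module.IsTorsionFree 𝔖ₑ N := isTorsionFree_of_smul_injective hmax
    (hmax ▸ mk_C_mem_span_mk_X hϖ hE hdeg) fun n hn => hϖN n (by rwa [hN.mk_smul] at hn)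
  infer_instance

end EisensteinQuotient

theorem stmt14_general (p : ℕ) [Fact p.Prime]
    (k : Type*) [Field k] [CharP k p] [PerfectRing k p]
    (φ : (WittVector p k)⟦X⟧ →+* (WittVector p k)⟦X⟧)
    (E : Polynomial (WittVector p k))
    (hEis : E.IsEisensteinAt (Ideal.span {(p : WittVector p k)}))
    (𝔐 : Type*) [AddCommGroup 𝔐] [Module (WittVector p k)⟦X⟧ 𝔐]
    [Module.Finite (WittVector p k)⟦X⟧ 𝔐] [Module.Free (WittVector p k)⟦X⟧ 𝔐]
    (F : 𝔐 →ₛₗ[φ] 𝔐)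
    -- `F` has height `≤ 2`: the cokernel of `1 ⊗ φ` is killed by `E(u)²`
    (hheight : ∀ x : 𝔐, ((E : (WittVector p k)⟦X⟧) ^ 2) • x ∈
      Submodule.span (WittVector p k)⟦X⟧ (Set.range F))
    -- perfect symmetric pairing, compatible with Frobenius up to `E(u)²` and a unit
    (B : 𝔐 →ₗ[(WittVector p k)⟦X⟧] 𝔐 →ₗ[(WittVector p k)⟦X⟧] (WittVector p k)⟦X⟧)
    (hBperf : Function.Bijective B)
    (c : ((WittVector p k)⟦X⟧)ˣ)
    (hBF : ∀ x y : 𝔐,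
      B (F x) (F y) = (E : (WittVector p k)⟦X⟧) ^ 2 * (c : (WittVector p k)⟦X⟧) * φ (B x y))
    (M' : Submodule (WittVector p k)⟦X⟧ 𝔐)
    (hM' : ∀ x : 𝔐, x ∈ M' ↔
      (E : (WittVector p k)⟦X⟧) • x ∈ Submodule.span (WittVector p k)⟦X⟧ (Set.range F)) :
    (∀ x : 𝔐, (E : (WittVector p k)⟦X⟧) • x ∈ M') ∧
    (∀ x : 𝔐, (p : (WittVector p k)⟦X⟧) • x ∈ M' → x ∈ M') ∧
    (∃ h : Module.IsTorsionBySet (WittVector p k)⟦X⟧ (𝔐 ⧸ M')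
        ((Ideal.span {(E : (WittVector p k)⟦X⟧)} : Ideal (WittVector p k)⟦X⟧) : Set (WittVector p k)⟦X⟧),
      @Module.Free ((WittVector p k)⟦X⟧ ⧸ Ideal.span {(E : (WittVector p k)⟦X⟧)})
          (𝔐 ⧸ M') _ _ h.module ∧
      @Module.Finite ((WittVector p k)⟦X⟧ ⧸ Ideal.span {(E : (WittVector p k)⟦X⟧)})
          (𝔐 ⧸ M') _ _ h.module) := by
  have hp : Prime (C (p : WittVector p k)) := prime_C (WittVector.irreducible p).prime
  have hpc : ¬C (p : WittVector p k) ∣ (E : (WittVector p k)⟦X⟧) ^ 2 * c := fun h =>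
    (hp.dvd_or_dvd h).elim (fun hE => hEis.not_C_dvd_coe (hp.dvd_of_dvd_pow hE))
      fun hc => hp.not_isUnit (isUnit_of_dvd_unit hc c.isUnit)
  have hE_mem (x : 𝔐) : (E : (WittVector p k)⟦X⟧) • x ∈ M' :=
    (hM' _).mpr (by rw [smul_smul, ← sq]; exact hheight x)
  have hp_mem (x : 𝔐) (hx : (p : (WittVector p k)⟦X⟧) • x ∈ M') : x ∈ M' := by
    rw [hM', smul_comm, ← map_natCast C] at hx
    exact (hM' x).mpr (mem_span_range_of_smul_mem_of_pairing F hBperf hBF hp hpc hx)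
  have htors : Module.IsTorsionBySet (WittVector p k)⟦X⟧ (𝔐 ⧸ M')
      (Ideal.span {(E : (WittVector p k)⟦X⟧)}) :=
    (Module.isTorsionBySet_span_singleton_iff _).mpr fun x => by
      obtain ⟨x, rfl⟩ := M'.mkQ_surjective x
      exact (Submodule.Quotient.mk_eq_zero M').mpr (hE_mem x)
  refine ⟨hE_mem, hp_mem, htors, free_and_finite_of_isTorsionBySet_span_eisenstein
    (WittVector.irreducible p) hEis htors fun x hx => ?_⟩
  obtain ⟨x, rfl⟩ := M'.mkQ_surjective x
  rw [map_natCast] at hx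
  exact (Submodule.Quotient.mk_eq_zero M').mpr (hp_mem x ((Submodule.Quotient.mk_eq_zero M').mp hx))

/-- Let `𝔖 = W[[u]]` over the Witt vectors `W = W(k)` of a perfect field `k` of characteristic
`p`, with Frobenius `φ` (the Witt-vector Frobenius on coefficients and `u ↦ u^p`), and let
`E(u)` be an Eisenstein polynomial.  Let `𝔐` be a finite free `𝔖`-module with a `φ`-semilinear
map `F` of height `≤ 2` (the `𝔖`-span of the image of `F`, i.e. the image of `1 ⊗ φ`, contains
`E(u)²𝔐`), admitting a perfect symmetric `𝔖`-bilinear pairing compatible with Frobenius up to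
the twist `E(u)²` and a unit.  Set `𝔐' = {x ∈ 𝔐 : E(u)·x ∈ Im(1⊗φ)}`.  Then `𝔐/𝔐'` is killed
by `E(u)` and is `p`-torsion-free; consequently `𝔐/𝔐'` is a finite free module over
`𝔖/E(u) ≅ 𝒪_K`. -/
theorem stmt14 (p : ℕ) [Fact p.Prime]
    (k : Type*) [Field k] [CharP k p] [PerfectRing k p]
    (φ : (WittVector p k)⟦X⟧ →+* (WittVector p k)⟦X⟧)
    (hφC : ∀ a : WittVector p k,
      φ (PowerSeries.C (R := WittVector p k) a) = PowerSeries.C (R := WittVector p k) (WittVector.frobenius a))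
    (hφX : φ (PowerSeries.X : (WittVector p k)⟦X⟧) = (PowerSeries.X : (WittVector p k)⟦X⟧) ^ p)
    (E : Polynomial (WittVector p k)) (hEmonic : E.Monic)
    (hEis : E.IsEisensteinAt (Ideal.span {(p : WittVector p k)}))
    (𝔐 : Type*) [AddCommGroup 𝔐] [Module (WittVector p k)⟦X⟧ 𝔐]
    [Module.Finite (WittVector p k)⟦X⟧ 𝔐] [Module.Free (WittVector p k)⟦X⟧ 𝔐]
    (F : 𝔐 →ₛₗ[φ] 𝔐)
    -- `F` has height `≤ 2`: the cokernel of `1 ⊗ φ` is killed by `E(u)²`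
    (hheight : ∀ x : 𝔐, ((E : (WittVector p k)⟦X⟧) ^ 2) • x ∈
      Submodule.span (WittVector p k)⟦X⟧ (Set.range F))
    -- perfect symmetric pairing, compatible with Frobenius up to `E(u)²` and a unit
    (B : 𝔐 →ₗ[(WittVector p k)⟦X⟧] 𝔐 →ₗ[(WittVector p k)⟦X⟧] (WittVector p k)⟦X⟧)
    (hBsymm : ∀ x y : 𝔐, B x y = B y x)
    (hBperf : Function.Bijective B)
    (c : ((WittVector p k)⟦X⟧)ˣ)
    (hBF : ∀ x y : 𝔐,
      B (F x) (F y) = (E : (WittVector p k)⟦X⟧) ^ 2 * (c : (WittVector p k)⟦X⟧) * φ (B x y))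
    (M' : Submodule (WittVector p k)⟦X⟧ 𝔐)
    (hM' : ∀ x : 𝔐, x ∈ M' ↔
      (E : (WittVector p k)⟦X⟧) • x ∈ Submodule.span (WittVector p k)⟦X⟧ (Set.range F)) :
    (∀ x : 𝔐, (E : (WittVector p k)⟦X⟧) • x ∈ M') ∧
    (∀ x : 𝔐, (p : (WittVector p k)⟦X⟧) • x ∈ M' → x ∈ M') ∧
    (∃ h : Module.IsTorsionBySet (WittVector p k)⟦X⟧ (𝔐 ⧸ M')
        ((Ideal.span {(E : (WittVector p k)⟦X⟧)} : Ideal (WittVector p k)⟦X⟧) : Set (WittVector p k)⟦X⟧),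
      @Module.Free ((WittVector p k)⟦X⟧ ⧸ Ideal.span {(E : (WittVector p k)⟦X⟧)})
          (𝔐 ⧸ M') _ _ h.module ∧
      @Module.Finite ((WittVector p k)⟦X⟧ ⧸ Ideal.span {(E : (WittVector p k)⟦X⟧)})
          (𝔐 ⧸ M') _ _ h.module) :=
  stmt14_general p k φ E hEis 𝔐 F hheight B hBperf c hBF M' hM'
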